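/- arXiv:1501.01506 — 2 statements merged into one kernel-verified Lean document; each statement's English description precedes it below -/
import Mathlib

section
/- With A_T as defined, a_{1,1} - β ∑_{i=2}^{T} a_{i,1} = (1 + β²(T-1))/2. -/
open Finset

/-- θ_j^T = (T+1-j) - (T-j)α. -/
noncomputable def theta (α : ℝ) (T j : ℕ) : ℝ := ((T : ℝ) + 1 - j) - ((T : ℝ) - j) * α

/-- Entry a_{ik} of the matrix A_T, for 1-based indices with k ≤ i. -/
noncomputable def entryLow (α : ℝ) (T i k : ℕ) : ℝ :=
  if i = k then
    (if i = T then (1 : ℝ) / 2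
     else 1 / 2 + (α - 1) ^ 2 * ∑ j ∈ Finset.Icc i (T - 1), theta α T (j + 1) * α ^ (2 * j - 2 * i))
  else if i = T then (α - 1) * α ^ (T - k - 1) / 2
  else (α - 1) * theta α T i * α ^ (i - k - 1) / 2
        + (α - 1) ^ 2 * ∑ j ∈ Finset.Icc i (T - 1), theta α T (j + 1) * α ^ (2 * j - i - k)

/-- Entry a_{ik} of A_T (extended symmetrically), 1-based indices. -/
noncomputable def entryA (α : ℝ) (T i k : ℕ) : ℝ :=
  if k ≤ i then entryLow α T i k else entryLow α T k i

/-- The symmetric T×T matrix A_T. -/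
noncomputable def Amat (α : ℝ) (T : ℕ) : Matrix (Fin T) (Fin T) ℝ :=
  fun i k => entryA α T (i.1 + 1) (k.1 + 1)

/-!
Write `T = n + 2` and `β = α - 1`. Expanding the first column, the left-hand side becomes
`1/2 + β² (X - β D) - (β²/2) S`, where `X = ∑_{k ≤ n} θ_{k+2} α^{2k}`, `S = ∑_{k ≤ n} θ_{k+2} α^k`
and `D` is the triangular double sum coming from the off-diagonal entries (the term `a_{T1}` is
absorbed into `S` because `θ_T = 1`). Summing `D` along antidiagonals, each antidiagonal carries
a geometric sum with `β ∑_{k ≤ j} α^{2j-k+1} = α^{2j+2} - α^{j+1}`, which gives `X - β D = S`.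
Finally `S = n + 1` telescopes, since `θ_{k+2} α^k = (n+1-k) α^k - (n-k) α^{k+1}`.
-/

lemma sum_Icc_eq_sum_range {M : Type*} [AddCommMonoid M] (f : ℕ → M) (a b : ℕ) :
    ∑ i ∈ Icc a b, f i = ∑ k ∈ range (b + 1 - a), f (a + k) := by
  rw [← Finset.Ico_add_one_right_eq_Icc, Finset.sum_Ico_eq_sum_range]

lemma theta_self (α : ℝ) (T : ℕ) : theta α T T = 1 := by
  unfold theta; ring

lemma theta_mul_pow_eq_sub (α : ℝ) (n k : ℕ) :
    theta α (n + 2) (k + 2) * α ^ k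
      = ((n : ℝ) + 1 - k) * α ^ k - ((n : ℝ) + 1 - (k + 1 : ℕ)) * α ^ (k + 1) := by
  unfold theta; push_cast; ring

lemma sum_range_theta_mul_pow (α : ℝ) (n : ℕ) :
    ∑ k ∈ range (n + 1), theta α (n + 2) (k + 2) * α ^ k = n + 1 := by
  simp_rw [theta_mul_pow_eq_sub]
  rw [sum_range_sub']
  simp

section CommRing

variable {R : Type*} [CommRing R]

lemma sub_one_mul_sum_range_pow (x : R) (j : ℕ) :
    (x - 1) * ∑ k ∈ range (j + 1), x ^ (2 * (j - k) + k + 1) = x ^ (2 * j + 2) - x ^ (j + 1) := by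
  have hterm : ∀ k ∈ range (j + 1),
      x ^ (2 * (j - k) + k + 1) = x * (x ^ k * (x ^ 2) ^ (j + 1 - 1 - k)) := fun k hk => by
    rw [← pow_mul, ← pow_add, ← pow_succ']
    congr 1
    have := mem_range.mp hk
    omega
  rw [sum_congr rfl hterm, ← mul_sum]
  linear_combination (-1 : R) * geom_sum₂_mul x (x ^ 2) (j + 1)

lemma sum_mul_pow_two_mul_sub_triangle_sum (t : ℕ → R) (x : R) (n : ℕ) :
    ∑ k ∈ range (n + 1), t k * x ^ (2 * k)
      - (x - 1) * ∑ k ∈ range n, ∑ l ∈ range (n - k), t (k + l + 1) * x ^ (2 * l + k + 1)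
      = ∑ k ∈ range (n + 1), t k * x ^ k := by
  rw [← sum_range_diag_flip n (fun k l => t (k + l + 1) * x ^ (2 * l + k + 1)), mul_sum]
  have hantidiag : ∀ j ∈ range n,
      (x - 1) * ∑ k ∈ range (j + 1), t (k + (j - k) + 1) * x ^ (2 * (j - k) + k + 1)
        = t (j + 1) * x ^ (2 * (j + 1)) - t (j + 1) * x ^ (j + 1) := fun j _ => by
    have hsum : ∑ k ∈ range (j + 1), t (k + (j - k) + 1) * x ^ (2 * (j - k) + k + 1)
        = t (j + 1) * ∑ k ∈ range (j + 1), x ^ (2 * (j - k) + k + 1) := by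
      rw [mul_sum]
      refine sum_congr rfl fun k hk => ?_
      rw [Nat.add_sub_cancel' (Nat.lt_succ_iff.mp (mem_range.mp hk))]
    rw [hsum, mul_left_comm, sub_one_mul_sum_range_pow]
    ring
  rw [sum_congr rfl hantidiag, sum_range_succ', sum_range_succ' (fun k => t k * x ^ k),
    sum_sub_distrib]
  ring

end CommRing

lemma entryA_one_one (α : ℝ) (n : ℕ) :
    entryA α (n + 2) 1 1
      = 1 / 2 + (α - 1) ^ 2 * ∑ k ∈ range (n + 1), theta α (n + 2) (k + 2) * α ^ (2 * k) := by
  rw [entryA, if_pos le_rfl, entryLow, if_pos rfl, if_neg (by omega), sum_Icc_eq_sum_range,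
    show n + 2 - 1 + 1 - 1 = n + 1 by omega]
  refine congrArg (1 / 2 + (α - 1) ^ 2 * ·) (sum_congr rfl fun k _ => ?_)
  rw [show 1 + k + 1 = k + 2 by omega, show 2 * (1 + k) - 2 * 1 = 2 * k by omega]

lemma entryA_last_one (α : ℝ) (n : ℕ) : entryA α (n + 2) (n + 2) 1 = (α - 1) * α ^ n / 2 := by
  rw [entryA, if_pos (by omega), entryLow, if_neg (by omega), if_pos rfl]
  rfl

lemma entryA_add_two_one (α : ℝ) {n k : ℕ} (hk : k < n) :
    entryA α (n + 2) (k + 2) 1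
      = (α - 1) / 2 * (theta α (n + 2) (k + 2) * α ^ k)
        + (α - 1) ^ 2 * ∑ l ∈ range (n - k), theta α (n + 2) (k + l + 3) * α ^ (2 * l + k + 1) := by
  rw [entryA, if_pos (by omega), entryLow, if_neg (by omega), if_neg (by omega),
    sum_Icc_eq_sum_range, show k + 2 - 1 - 1 = k by omega,
    show n + 2 - 1 + 1 - (k + 2) = n - k by omega]
  have hsum : ∀ l ∈ range (n - k),
      theta α (n + 2) (k + 2 + l + 1) * α ^ (2 * (k + 2 + l) - (k + 2) - 1)
        = theta α (n + 2) (k + l + 3) * α ^ (2 * l + k + 1) := fun l _ => by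
    rw [show k + 2 + l + 1 = k + l + 3 by omega,
      show 2 * (k + 2 + l) - (k + 2) - 1 = 2 * l + k + 1 by omega]
  rw [sum_congr rfl hsum]
  ring

lemma sum_Icc_entryA_one (α : ℝ) (n : ℕ) :
    ∑ i ∈ Icc 2 (n + 2), entryA α (n + 2) i 1
      = (α - 1) / 2 * ∑ k ∈ range (n + 1), theta α (n + 2) (k + 2) * α ^ k
        + (α - 1) ^ 2 * ∑ k ∈ range n, ∑ l ∈ range (n - k),
            theta α (n + 2) (k + l + 3) * α ^ (2 * l + k + 1) := by
  have hinner : ∀ k ∈ range n, entryA α (n + 2) (2 + k) 1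
      = (α - 1) / 2 * (theta α (n + 2) (k + 2) * α ^ k)
        + (α - 1) ^ 2 * ∑ l ∈ range (n - k), theta α (n + 2) (k + l + 3) * α ^ (2 * l + k + 1) :=
    fun k hk => by rw [add_comm 2 k, entryA_add_two_one α (mem_range.mp hk)]
  rw [sum_Icc_eq_sum_range, show n + 2 + 1 - 2 = n + 1 by omega, sum_range_succ, sum_range_succ,
    theta_self, add_comm 2 n, entryA_last_one, sum_congr rfl hinner, sum_add_distrib,
    ← mul_sum, ← mul_sum]
  ring

/-- a_{1,1} - β ∑_{i=2}^{T} a_{i,1} = (1 + β²(T-1))/2. -/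
theorem first_column_sum (α : ℝ) (T : ℕ) (hT : 2 ≤ T) :
    entryA α T 1 1 - (α - 1) * ∑ i ∈ Finset.Icc 2 T, entryA α T i 1
      = (1 + (α - 1) ^ 2 * ((T : ℝ) - 1)) / 2 := by
  obtain ⟨n, rfl⟩ : ∃ n, T = n + 2 := ⟨T - 2, by omega⟩
  have key := sum_mul_pow_two_mul_sub_triangle_sum (fun k => theta α (n + 2) (k + 2)) α n
  rw [sum_range_theta_mul_pow] at key
  rw [entryA_one_one, sum_Icc_entryA_one, sum_range_theta_mul_pow]
  push_cast
  linear_combination (α - 1) ^ 2 * key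
end

section
/- For all T ≥ 1, det A_T = (1/2^T) ∏_{i=0}^{T-1} (1 + β² i), and A_T is positive definite. -/
/-!
With `β = α - 1`, the matrix factors as `A_T = U D Uᵀ`, where `U` is unit upper triangular
with `U_{ij} = β α^(j-i-1)` for `i < j` and `D` is diagonal with pivots `(1 + β² (T-1-j)) / 2`
(0-based indices). Hence `det A_T` is the product of the pivots, and `A_T` is positive definite
because all pivots are positive and `U` is invertible. Comparing entries of `U D Uᵀ` with those
of `A_T` reduces to the telescoping identity `∑_{m<n} α^(2m) ((n-m) - (n-m-1) α²) = n`.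
-/

open Finset

open Matrix

noncomputable def upperEntry (α : ℝ) (i j : ℕ) : ℝ :=
  if i = j then 1 else if i < j then (α - 1) * α ^ (j - i - 1) else 0

noncomputable def upperFactor (α : ℝ) (T : ℕ) : Matrix (Fin T) (Fin T) ℝ :=
  of fun i j => upperEntry α i j

noncomputable def pivot (α : ℝ) (T j : ℕ) : ℝ := (1 + (α - 1) ^ 2 * ((T : ℝ) - 1 - j)) / 2

/-- `thetaSum α n = ∑_{j=i}^{T-1} θ_{j+1}^T α^(2(j-i))` for `T = i + n`, in 1-based indices. -/
noncomputable def thetaSum (α : ℝ) (n : ℕ) : ℝ :=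
  ∑ m ∈ range n, α ^ (2 * m) * (((n : ℝ) - m) - ((n : ℝ) - m - 1) * α)

section upperEntry

variable (α : ℝ) {i j : ℕ}

lemma upperEntry_self (i : ℕ) : upperEntry α i i = 1 := if_pos rfl

lemma upperEntry_of_lt (h : i < j) : upperEntry α i j = (α - 1) * α ^ (j - i - 1) := by
  rw [upperEntry, if_neg h.ne, if_pos h]

lemma upperEntry_of_gt (h : j < i) : upperEntry α i j = 0 := by
  rw [upperEntry, if_neg (by omega), if_neg (by omega)]

end upperEntry

lemma sum_pow_mul_telescope (α : ℝ) (n : ℕ) :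
    ∑ m ∈ range n, α ^ (2 * m) * (((n : ℝ) - m) - ((n : ℝ) - m - 1) * α ^ 2) = (n : ℝ) := by
  have hterm : ∀ m ∈ range n, α ^ (2 * m) * (((n : ℝ) - m) - ((n : ℝ) - m - 1) * α ^ 2)
      = ((n : ℝ) - m) * α ^ (2 * m) - ((n : ℝ) - (m + 1 : ℕ)) * α ^ (2 * (m + 1)) := by
    intro m _
    push_cast
    ring
  rw [sum_congr rfl hterm, sum_range_sub' (fun m => ((n : ℝ) - m) * α ^ (2 * m))]
  simp

lemma thetaSum_eq (α : ℝ) (n : ℕ) :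
    thetaSum α n = n / 2 + ∑ m ∈ range n, α ^ (2 * m) * pivot α n m := by
  rw [← sum_pow_mul_telescope α n, sum_div, ← sum_add_distrib, thetaSum]
  exact sum_congr rfl fun m _ => by rw [pivot]; ring

lemma sum_Icc_theta_mul_pow (α : ℝ) (i n e : ℕ) (he : e ≤ 2 * (i + 1)) :
    ∑ j ∈ Icc (i + 1) (i + n), theta α (i + n + 1) (j + 1) * α ^ (2 * j - e)
      = α ^ (2 * (i + 1) - e) * thetaSum α n := by
  rw [thetaSum, mul_sum, ← Ico_add_one_right_eq_Icc, sum_Ico_eq_sum_range,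
    show i + n + 1 - (i + 1) = n by omega]
  refine sum_congr rfl fun m _ => ?_
  rw [show 2 * (i + 1 + m) - e = 2 * (i + 1) - e + 2 * m by omega, pow_add, theta]
  push_cast
  ring

lemma entryLow_diag (α : ℝ) (i n : ℕ) :
    entryLow α (i + n + 1) (i + 1) (i + 1) = 1 / 2 + (α - 1) ^ 2 * thetaSum α n := by
  rcases n with _ | n
  · simp [entryLow, thetaSum]
  · rw [entryLow, if_pos rfl, if_neg (by omega), Nat.add_sub_cancel,
      sum_Icc_theta_mul_pow α i (n + 1) _ le_rfl, Nat.sub_self, pow_zero, one_mul]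

lemma entryLow_of_lt (α : ℝ) {i k : ℕ} (n : ℕ) (hki : k < i) :
    entryLow α (i + n + 1) (i + 1) (k + 1)
      = (α - 1) * ((n + 1) - n * α) * α ^ (i - k - 1) / 2
        + (α - 1) ^ 2 * α ^ (i - k) * thetaSum α n := by
  rcases n with _ | n
  · rw [entryLow, if_neg (by omega), if_pos rfl, show i + 0 + 1 - (k + 1) - 1 = i - k - 1 by omega]
    simp [thetaSum]
  · rw [entryLow, if_neg (by omega), if_neg (by omega), Nat.add_sub_cancel]
    simp only [Nat.sub_sub]
    rw [sum_Icc_theta_mul_pow α i (n + 1) _ (by omega), show 2 * (i + 1) - (i + 1 + (k + 1)) = i - k by omega,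
      show i + 1 - (k + 1 + 1) = i - k - 1 by omega, show i - (k + 1) = i - k - 1 by omega, theta]
    push_cast
    ring

lemma sum_upperEntry_mul_pivot (α : ℝ) {i k : ℕ} (n : ℕ) (hk : k ≤ i) :
    ∑ j ∈ range (i + n + 1), upperEntry α i j * pivot α (i + n + 1) j * upperEntry α k j
      = pivot α (i + n + 1) i * upperEntry α k i
        + (α - 1) ^ 2 * α ^ (i - k) * ∑ m ∈ range n, α ^ (2 * m) * pivot α n m := by
  rw [add_assoc, sum_range_add, sum_range_succ', mul_sum,
    sum_eq_zero fun j hj => by rw [upperEntry_of_gt α (mem_range.1 hj), zero_mul, zero_mul],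
    zero_add, add_zero, upperEntry_self, one_mul, add_comm]
  congr 1
  refine sum_congr rfl fun m _ => ?_
  rw [upperEntry_of_lt α (by omega), upperEntry_of_lt α (by omega),
    show i + (m + 1) - i - 1 = m by omega, show i + (m + 1) - k - 1 = (i - k) + m by omega,
    pow_add, pivot, pivot]
  push_cast
  ring

lemma entryLow_eq_sum (α : ℝ) {T i k : ℕ} (hk : k ≤ i) (hi : i < T) :
    entryLow α T (i + 1) (k + 1)
      = ∑ j ∈ range T, upperEntry α i j * pivot α T j * upperEntry α k j := by
  obtain ⟨n, rfl⟩ : ∃ n, T = i + n + 1 := ⟨T - i - 1, by omega⟩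
  rw [sum_upperEntry_mul_pivot α n hk]
  rcases hk.eq_or_lt with rfl | hki
  · rw [entryLow_diag, upperEntry_self, Nat.sub_self, pow_zero, pivot]
    push_cast
    linear_combination (α - 1) ^ 2 * thetaSum_eq α n
  · rw [entryLow_of_lt α n hki, upperEntry_of_lt α hki, pivot,
      show α ^ (i - k) = α * α ^ (i - k - 1) by rw [← pow_succ']; congr 1; omega]
    push_cast
    linear_combination (α - 1) ^ 2 * α * α ^ (i - k - 1) * thetaSum_eq α n

theorem Amat_eq_upperFactor_mul_diagonal (α : ℝ) (T : ℕ) :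
    Amat α T = upperFactor α T * diagonal (fun j : Fin T => pivot α T j) * (upperFactor α T)ᵀ := by
  ext i k
  rw [mul_apply]
  simp only [mul_diagonal, transpose_apply, upperFactor, of_apply]
  rw [Fin.sum_univ_eq_sum_range (fun j => upperEntry α i j * pivot α T j * upperEntry α k j)]
  show entryA α T (i + 1) (k + 1) = _
  rcases le_or_gt k.1 i.1 with h | h
  · rw [entryA, if_pos (by omega), entryLow_eq_sum α h i.2]
  · rw [entryA, if_neg (by omega), entryLow_eq_sum α h.le k.2]
    exact sum_congr rfl fun j _ => by ring

lemma det_upperFactor (α : ℝ) (T : ℕ) : (upperFactor α T).det = 1 := by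
  rw [det_of_isUpperTriangular (M := upperFactor α T) fun _ _ h => upperEntry_of_gt α h]
  exact prod_eq_one fun i _ => upperEntry_self α i

lemma pivot_pos (α : ℝ) {T j : ℕ} (hj : j < T) : 0 < pivot α T j := by
  have : (j : ℝ) + 1 ≤ T := by exact_mod_cast hj
  unfold pivot
  nlinarith [sq_nonneg (α - 1)]

lemma prod_pivot (α : ℝ) (T : ℕ) :
    ∏ j ∈ range T, pivot α T j = 1 / 2 ^ T * ∏ i ∈ range T, (1 + (α - 1) ^ 2 * (i : ℝ)) := by
  rw [← prod_range_reflect (fun i : ℕ => 1 + (α - 1) ^ 2 * (i : ℝ)), one_div, ← inv_pow,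
    show (2⁻¹ : ℝ) ^ T = ∏ _j ∈ range T, 2⁻¹ by simp, ← prod_mul_distrib]
  refine prod_congr rfl fun j hj => ?_
  rw [pivot, Nat.cast_sub (by simp at hj; omega), Nat.cast_sub (by simp at hj; omega)]
  push_cast
  ring

theorem det_formula_and_posdef_general (α : ℝ) (T : ℕ) :
    (Amat α T).det = (1 / 2 ^ T) * ∏ i ∈ Finset.range T, (1 + (α - 1) ^ 2 * (i : ℝ))
      ∧ (Amat α T).PosDef := by
  rw [Amat_eq_upperFactor_mul_diagonal]
  refine ⟨?_, ?_⟩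
  · rw [det_mul, det_mul, det_transpose, det_upperFactor, det_diagonal, one_mul, mul_one,
      Fin.prod_univ_eq_prod_range (pivot α T), prod_pivot]
  · have hU : Function.Injective (upperFactor α T).vecMul :=
      vecMul_injective_iff_isUnit.2 ((isUnit_iff_isUnit_det _).2 (by rw [det_upperFactor]; exact isUnit_one))
    rw [← conjTranspose_eq_transpose_of_trivial]
    exact (posDef_diagonal_iff.2 fun j => pivot_pos α j.2).mul_mul_conjTranspose_same hU

/-- det A_T = (1/2^T) ∏_{i=0}^{T-1} (1 + β² i), and A_T is positive definite. -/
theorem det_formula_and_posdef (α : ℝ) (T : ℕ) (hT : 1 ≤ T) :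
    (Amat α T).det = (1 / 2 ^ T) * ∏ i ∈ Finset.range T, (1 + (α - 1) ^ 2 * (i : ℝ))
      ∧ (Amat α T).PosDef :=
  det_formula_and_posdef_general α T
end
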